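/- arXiv:2209.07968 — 5 statements merged into one kernel-verified Lean document; each statement's English description precedes it below -/
import Mathlib

section
/- (Theorem 2, direction (A') ⇒ (B')). Under the setup below, suppose condition (A') holds: there exist a constant C ≥ 0 and a sequence δ_n → 0 of nonnegative reals such that for all sufficiently large n, sup_{m,k ∈ ℤ, |m−k| ≤ v_n} |ℙ(S_n = m) − ℙ(S_n = k)| ≤ δ_n/b_n + C·ε_n/v_n. Then condition (B') holds: there exist a constant C' ≥ 0 and a sequence δ'_n → 0 of nonnegative reals such that for all sufficiently large n, sup_{m ∈ ℤ} |ℙ(S_n = m) − (1/b_n)·g((m − a_n)/b_n)| ≤ δ'_n/b_n + C'·ε_n/v_n. -/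
open MeasureTheory Filter Topology

/-- A nonnegative, integrable, uniformly continuous function with integral 1 is bounded. -/
lemma mukhin_aux_g_bdd (g : ℝ → ℝ) (h0 : ∀ x, 0 ≤ g x) (hint : Integrable g)
    (huc : UniformContinuous g) (hone : ∫ x, g x = 1) :
    ∃ M : ℝ, 0 ≤ M ∧ ∀ x, g x ≤ M := by
  obtain ⟨r, hr, hmod⟩ := Metric.uniformContinuous_iff.mp huc 1 one_pos
  refine ⟨2/r + 2, by positivity, fun x => ?_⟩
  by_contra hx
  push_neg at hx
  have key : ∀ s ∈ Set.Ioc x (x + r/2), (2/r + 1 : ℝ) ≤ g s := by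
    intro s hs
    have hd : dist s x < r := by
      rw [Real.dist_eq, abs_of_nonneg (by linarith [hs.1])]
      linarith [hs.2, hs.1]
    have := hmod hd
    rw [Real.dist_eq, abs_lt] at this
    linarith
  have hvol : volume (Set.Ioc x (x + r/2)) = ENNReal.ofReal (r/2) := by
    rw [Real.volume_Ioc]; ring_nf
  have hne : volume (Set.Ioc x (x + r/2)) ≠ ⊤ := by rw [hvol]; exact ENNReal.ofReal_ne_top
  have h1 : (2/r + 1) * (volume (Set.Ioc x (x + r/2))).toReal
      ≤ ∫ t in Set.Ioc x (x + r/2), g t :=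
    setIntegral_ge_of_const_le_real measurableSet_Ioc hne key hint.integrableOn
  have h2 : (∫ t in Set.Ioc x (x + r/2), g t) ≤ ∫ t, g t :=
    setIntegral_le_integral hint (Filter.Eventually.of_forall h0)
  rw [hvol, ENNReal.toReal_ofReal (by linarith)] at h1
  rw [hone] at h2
  have hexp : (2/r + 1) * (r/2) = 1 + r/2 := by field_simp
  linarith

/-- Increment of the primitive of `g` over a window of length `h` is close to `h * g x`. -/
lemma mukhin_aux_G_inc {g : ℝ → ℝ} (hint : Integrable g) {ζ r : ℝ}
    (hmod : ∀ s t : ℝ, |s - t| < r → |g s - g t| ≤ ζ) {h : ℝ} (hh : 0 < h) (hhr : h < r)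
    (x : ℝ) :
    |((∫ t in Set.Iic (x+h), g t) - ∫ t in Set.Iic x, g t) - h * g x| ≤ ζ * h := by
  have hsub : ((∫ t in Set.Iic (x+h), g t) - ∫ t in Set.Iic x, g t)
      = ∫ t in Set.Ioc x (x+h), g t := by
    rw [intervalIntegral.integral_Iic_sub_Iic hint.integrableOn hint.integrableOn,
      intervalIntegral.integral_of_le (by linarith)]
  have hvol : volume (Set.Ioc x (x + h)) = ENNReal.ofReal h := by
    rw [Real.volume_Ioc]; ring_nf
  have hconst : h * g x = ∫ t in Set.Ioc x (x+h), g x := by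
    rw [setIntegral_const, smul_eq_mul, measureReal_def, hvol, ENNReal.toReal_ofReal hh.le]
  rw [hsub, hconst, ← integral_sub hint.integrableOn ((integrableOn_const_iff (C := g x)).mpr (Or.inr (by
    rw [hvol]; exact ENNReal.ofReal_lt_top)))]
  have := norm_setIntegral_le_of_norm_le_const (μ := volume)
    (s := Set.Ioc x (x+h)) (f := fun t => g t - g x)
    (by rw [hvol]; exact ENNReal.ofReal_lt_top)
    (fun t ht => by
      simp only [Real.norm_eq_abs]
      exact hmod t x (by rw [abs_of_nonneg (by linarith [ht.1])]; linarith [ht.2]))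
  rw [measureReal_def, hvol, ENNReal.toReal_ofReal hh.le] at this
  simpa using this

/-- Theorem 2, direction (A') ⇒ (B'). -/
theorem mukhin_Aprime_implies_Bprime
    {Ω : Type*} [MeasurableSpace Ω] (μ : Measure Ω) [IsProbabilityMeasure μ]
    (S : ℕ → Ω → ℤ) (hS : ∀ n, Measurable (S n))
    (a : ℕ → ℝ) (b : ℕ → ℝ) (hb : ∀ n, 0 < b n)
    (hbtop : Tendsto b atTop atTop)
    (g : ℝ → ℝ) (hg_nonneg : ∀ x, 0 ≤ g x) (hg_int : Integrable g)
    (hg_uc : UniformContinuous g) (hg_one : ∫ x, g x = 1)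
    (G : ℝ → ℝ) (hG : ∀ x, G x = ∫ t in Set.Iic x, g t)
    (ε : ℕ → ℝ)
    (hε : ∀ n, ε n = ⨆ x : ℝ,
      |(μ {ω | (S n ω : ℝ) - a n < b n * x}).toReal - G x|)
    (hε0 : Tendsto ε atTop (𝓝 0))
    (v : ℕ → ℕ) (hv : ∀ n, 0 < v n)
    (hvb : Tendsto (fun n => (v n : ℝ) / b n) atTop (𝓝 0))
    (hA : ∃ C : ℝ, 0 ≤ C ∧ ∃ δ : ℕ → ℝ, (∀ n, 0 ≤ δ n) ∧
      Tendsto δ atTop (𝓝 0) ∧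
      ∀ᶠ n in atTop, ∀ m k : ℤ, |m - k| ≤ (v n : ℤ) →
        |(μ {ω | S n ω = m}).toReal - (μ {ω | S n ω = k}).toReal| ≤
          δ n / b n + C * ε n / v n) :
    ∃ C' : ℝ, 0 ≤ C' ∧ ∃ δ' : ℕ → ℝ, (∀ n, 0 ≤ δ' n) ∧
      Tendsto δ' atTop (𝓝 0) ∧
      ∀ᶠ n in atTop, ∀ m : ℤ,
        |(μ {ω | S n ω = m}).toReal - (1 / b n) * g (((m : ℝ) - a n) / b n)| ≤
          δ' n / b n + C' * ε n / v n := by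
  obtain ⟨C, hC, δ, hδ0, hδlim, hAev⟩ := hA
  obtain ⟨M, hM0, hM⟩ := mukhin_aux_g_bdd g hg_nonneg hg_int hg_uc hg_one
  -- basic facts
  have hP1 : ∀ s : Set Ω, (μ s).toReal ≤ 1 := fun s => by
    simpa using ENNReal.toReal_mono (by simp) (prob_le_one (μ := μ) (s := s))
  have hG0 : ∀ x, 0 ≤ G x := fun x => by
    rw [hG]; exact setIntegral_nonneg measurableSet_Iic (fun t _ => hg_nonneg t)
  have hG1 : ∀ x, G x ≤ 1 := fun x => by
    rw [hG, ← hg_one]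
    exact setIntegral_le_integral hg_int (Filter.Eventually.of_forall hg_nonneg)
  have hGmono : ∀ x y : ℝ, x ≤ y → G x ≤ G y := fun x y hxy => by
    rw [hG, hG]
    exact setIntegral_mono_set hg_int.integrableOn (Filter.Eventually.of_forall hg_nonneg)
      (HasSubset.Subset.eventuallyLE (Set.Iic_subset_Iic.mpr hxy))
  -- each term is at most the sup defining ε n
  have hεx : ∀ n (x : ℝ),
      |(μ {ω | (S n ω : ℝ) - a n < b n * x}).toReal - G x| ≤ ε n := by
    intro n x
    rw [hε n]
    refine le_ciSup (f := fun y => |(μ {ω | (S n ω : ℝ) - a n < b n * y}).toReal - G y|)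
      ⟨2, ?_⟩ x
    rintro y ⟨x', rfl⟩
    have h1 := hP1 {ω | (S n ω : ℝ) - a n < b n * x'}
    have h2 := hG0 x'
    have h3 := hG1 x'
    have h4 : (0:ℝ) ≤ (μ {ω | (S n ω : ℝ) - a n < b n * x'}).toReal := ENNReal.toReal_nonneg
    exact abs_le.mpr ⟨by linarith, by linarith⟩
  have hεnn : ∀ n, 0 ≤ ε n := fun n => by
    rw [hε n]; exact Real.iSup_nonneg fun x => abs_nonneg _
  -- the c.d.f. of S n at integers
  have hF : ∀ n (k : ℤ),
      |(μ {ω | S n ω < k}).toReal - G (((k:ℝ) - a n)/b n)| ≤ ε n := by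
    intro n k
    have hset : {ω | (S n ω : ℝ) - a n < b n * (((k:ℝ) - a n)/b n)} = {ω | S n ω < k} := by
      ext ω
      simp only [Set.mem_setOf_eq]
      rw [mul_comm, div_mul_cancel₀ _ (hb n).ne', sub_lt_sub_iff_right]
      exact Int.cast_lt
    have := hεx n (((k:ℝ) - a n)/b n)
    rwa [hset] at this
  have hstep : ∀ n (k : ℤ), (μ {ω | S n ω < k + 1}).toReal
      = (μ {ω | S n ω < k}).toReal + (μ {ω | S n ω = k}).toReal := by
    intro n k
    have hset : {ω | S n ω < k + 1} = {ω | S n ω < k} ∪ {ω | S n ω = k} := by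
      ext ω; simp only [Set.mem_setOf_eq, Set.mem_union]; omega
    have hdis : Disjoint {ω | S n ω < k} {ω | S n ω = k} := by
      rw [Set.disjoint_left]
      intro ω h1 h2
      simp only [Set.mem_setOf_eq] at h1 h2
      omega
    have hm : MeasurableSet {ω | S n ω = k} := hS n (measurableSet_singleton k)
    rw [hset, measure_union hdis hm,
      ENNReal.toReal_add (measure_ne_top μ _) (measure_ne_top μ _)]
  have hsum : ∀ n (m : ℤ) (N : ℕ),
      ∑ j ∈ Finset.range N, (μ {ω | S n ω = m + (j:ℤ)}).toReal
        = (μ {ω | S n ω < m + (N:ℤ)}).toReal - (μ {ω | S n ω < m}).toReal := by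
    intro n m N
    induction N with
    | zero => simp
    | succ N ih =>
      have e : m + ((N+1 : ℕ):ℤ) = (m + (N:ℤ)) + 1 := by push_cast; ring
      rw [Finset.sum_range_succ, ih, e, hstep n (m + (N:ℤ))]
      ring
  -- the modulus sequence
  set w : ℕ → ℝ := fun n =>
    ⨆ x : ℝ, |(b n / (v n : ℝ)) * (G (x + (v n : ℝ) / b n) - G x) - g x| with hw_def
  have hVpos : ∀ n, (0:ℝ) < (v n : ℝ) := fun n => by exact_mod_cast hv n
  have hwbdd : ∀ n, BddAbove (Set.range fun x : ℝ =>
      |(b n / (v n : ℝ)) * (G (x + (v n : ℝ) / b n) - G x) - g x|) := by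
    intro n
    refine ⟨b n / (v n : ℝ) + M, ?_⟩
    rintro y ⟨x, rfl⟩
    have hbv : 0 ≤ b n / (v n : ℝ) := le_of_lt (div_pos (hb n) (hVpos n))
    have hd1 : 0 ≤ G (x + (v n : ℝ) / b n) - G x :=
      sub_nonneg.mpr (hGmono _ _ (le_add_of_nonneg_right (div_nonneg (Nat.cast_nonneg _) (hb n).le)))
    have hd2 : G (x + (v n : ℝ) / b n) - G x ≤ 1 := by
      have := hG1 (x + (v n : ℝ) / b n); have := hG0 x; linarith
    have hA1 : 0 ≤ (b n / (v n : ℝ)) * (G (x + (v n : ℝ) / b n) - G x) :=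
      mul_nonneg hbv hd1
    have hA2 : (b n / (v n : ℝ)) * (G (x + (v n : ℝ) / b n) - G x) ≤ b n / (v n : ℝ) := by
      calc (b n / (v n : ℝ)) * (G (x + (v n : ℝ) / b n) - G x)
          ≤ (b n / (v n : ℝ)) * 1 := mul_le_mul_of_nonneg_left hd2 hbv
        _ = b n / (v n : ℝ) := mul_one _
    exact abs_le.mpr ⟨by linarith [hg_nonneg x, hM x], by linarith [hg_nonneg x, hM x]⟩
  have hwx : ∀ n (x : ℝ),
      |(b n / (v n : ℝ)) * (G (x + (v n : ℝ) / b n) - G x) - g x| ≤ w n :=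
    fun n x => le_ciSup (hwbdd n) x
  have hwnn : ∀ n, 0 ≤ w n := fun n => Real.iSup_nonneg fun x => abs_nonneg _
  -- w tends to 0
  have hwlim : Tendsto w atTop (𝓝 0) := by
    rw [Metric.tendsto_atTop]
    intro ζ hζ
    obtain ⟨r, hr, hmod⟩ := Metric.uniformContinuous_iff.mp hg_uc (ζ/2) (half_pos hζ)
    have hmod' : ∀ s t : ℝ, |s - t| < r → |g s - g t| ≤ ζ/2 := by
      intro s t hst
      have := hmod (a := s) (b := t) (by rwa [Real.dist_eq])
      rw [Real.dist_eq] at this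
      exact this.le
    obtain ⟨N, hN⟩ := Metric.tendsto_atTop.mp hvb r hr
    refine ⟨N, fun n hn => ?_⟩
    rw [Real.dist_eq, sub_zero, abs_of_nonneg (hwnn n)]
    have hbound : w n ≤ ζ/2 := by
      rw [hw_def]
      refine ciSup_le fun x => ?_
      set h : ℝ := (v n : ℝ) / b n with hh_def
      have hh : 0 < h := div_pos (hVpos n) (hb n)
      have hhr : h < r := by
        have := hN n hn
        rw [Real.dist_eq, sub_zero, abs_of_nonneg hh.le] at this
        exact this
      have hD := mukhin_aux_G_inc hg_int hmod' hh hhr x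
      rw [← hG, ← hG] at hD
      have hbv : b n / (v n : ℝ) = h⁻¹ := by rw [hh_def, inv_div]
      rw [hbv, show h⁻¹ * (G (x + h) - G x) - g x
          = h⁻¹ * ((G (x + h) - G x) - h * g x) from by field_simp]
      rw [abs_mul, abs_inv, abs_of_pos hh]
      calc h⁻¹ * |G (x + h) - G x - h * g x| ≤ h⁻¹ * (ζ/2 * h) :=
            mul_le_mul_of_nonneg_left hD (inv_nonneg.mpr hh.le)
        _ = ζ/2 := by field_simp
    linarith
  -- conclusion
  refine ⟨C + 2, by linarith, fun n => δ n + w n,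
    fun n => add_nonneg (hδ0 n) (hwnn n), by simpa using hδlim.add hwlim, ?_⟩
  filter_upwards [hAev] with n hAn
  intro m
  set P : ℤ → ℝ := fun k => (μ {ω | S n ω = k}).toReal with hP_def
  set V : ℝ := (v n : ℝ) with hV_def
  set B : ℝ := b n with hB_def
  have hV : (0:ℝ) < V := hVpos n
  have hB : (0:ℝ) < B := hb n
  set x : ℝ := ((m:ℝ) - a n) / B with hx_def
  set h : ℝ := V / B with hh_def
  set Sg : ℝ := ∑ j ∈ Finset.range (v n), P (m + (j:ℤ)) with hSg_def
  -- step 1 : averaging over the window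
  have h1 : |V * P m - Sg| ≤ V * (δ n / B + C * ε n / V) := by
    have e : V * P m - Sg = ∑ j ∈ Finset.range (v n), (P m - P (m + (j:ℤ))) := by
      rw [hSg_def, Finset.sum_sub_distrib, Finset.sum_const, Finset.card_range, nsmul_eq_mul]
    rw [e]
    calc |∑ j ∈ Finset.range (v n), (P m - P (m + (j:ℤ)))|
        ≤ ∑ j ∈ Finset.range (v n), |P m - P (m + (j:ℤ))| :=
          Finset.abs_sum_le_sum_abs _ _
      _ ≤ ∑ _j ∈ Finset.range (v n), (δ n / B + C * ε n / V) := by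
          refine Finset.sum_le_sum fun j hj => ?_
          refine hAn m (m + (j:ℤ)) ?_
          rw [show m - (m + (j:ℤ)) = -(j:ℤ) by ring, abs_neg, Int.abs_natCast]
          exact_mod_cast (Finset.mem_range.mp hj).le
      _ = V * (δ n / B + C * ε n / V) := by
          rw [Finset.sum_const, Finset.card_range, nsmul_eq_mul]
  have t1 : |P m - Sg / V| ≤ δ n / B + C * ε n / V := by
    have e : P m - Sg / V = (V * P m - Sg) / V := by field_simp
    rw [e, abs_div, abs_of_pos hV, div_le_iff₀ hV]
    calc |V * P m - Sg| ≤ V * (δ n / B + C * ε n / V) := h1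
      _ = (δ n / B + C * ε n / V) * V := mul_comm _ _
  -- step 2 : the sum equals an increment of the c.d.f., close to increment of G
  have hSgval : Sg = (μ {ω | S n ω < m + ((v n : ℕ):ℤ)}).toReal - (μ {ω | S n ω < m}).toReal :=
    hsum n m (v n)
  have hxh : (((m + ((v n : ℕ):ℤ) : ℤ):ℝ) - a n) / B = x + h := by
    rw [hx_def, hh_def, hV_def]
    push_cast
    ring
  have hA1 : |(μ {ω | S n ω < m + ((v n : ℕ):ℤ)}).toReal - G (x + h)| ≤ ε n := by
    have := hF n (m + ((v n : ℕ):ℤ))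
    rwa [hxh] at this
  have hA2 : |(μ {ω | S n ω < m}).toReal - G x| ≤ ε n := hF n m
  have t2 : |Sg / V - (G (x + h) - G x) / V| ≤ 2 * ε n / V := by
    have hnum : |Sg - (G (x + h) - G x)| ≤ 2 * ε n := by
      rw [hSgval]
      have p := abs_le.mp hA1
      have q := abs_le.mp hA2
      exact abs_le.mpr ⟨by linarith [p.1, q.2], by linarith [p.2, q.1]⟩
    have e : Sg / V - (G (x + h) - G x) / V = (Sg - (G (x + h) - G x)) / V := by ring
    rw [e, abs_div, abs_of_pos hV, div_le_div_iff₀ hV hV]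
    exact mul_le_mul_of_nonneg_right hnum hV.le
  -- step 3 : increment of G close to g
  have t3 : |(G (x + h) - G x) / V - (1 / B) * g x| ≤ w n / B := by
    have e : (G (x + h) - G x) / V - (1 / B) * g x
        = (1 / B) * ((B / V) * (G (x + h) - G x) - g x) := by
      field_simp
    rw [e, abs_mul, abs_of_pos (by positivity : (0:ℝ) < 1 / B)]
    have := hwx n x
    rw [← hh_def, ← hV_def, ← hB_def] at this
    calc (1 / B) * |(B / V) * (G (x + h) - G x) - g x| ≤ (1 / B) * w n :=
          mul_le_mul_of_nonneg_left this (by positivity)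
      _ = w n / B := by ring
  -- combine
  have tri1 : |P m - (1 / B) * g x|
      ≤ |P m - Sg / V| + |Sg / V - (G (x + h) - G x) / V|
        + |(G (x + h) - G x) / V - (1 / B) * g x| := by
    have u1 := abs_sub_le (P m) (Sg / V) ((G (x + h) - G x) / V)
    have u2 := abs_sub_le (P m) ((G (x + h) - G x) / V) ((1 / B) * g x)
    linarith
  have hsplit : (δ n + w n) / B + (C + 2) * ε n / V
      = (δ n / B + C * ε n / V) + 2 * ε n / V + w n / B := by ring
  rw [hsplit]
  calc |P m - (1 / B) * g x|
      ≤ |P m - Sg / V| + |Sg / V - (G (x + h) - G x) / V|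
        + |(G (x + h) - G x) / V - (1 / B) * g x| := tri1
    _ ≤ (δ n / B + C * ε n / V) + 2 * ε n / V + w n / B := by linarith [t1, t2, t3]
end

section
/- (Theorem 2, direction (B') ⇒ (A')). Under the setup below, suppose condition (B') holds: there exist a constant C ≥ 0 and a sequence δ_n → 0 of nonnegative reals such that for all sufficiently large n, sup_{m ∈ ℤ} |ℙ(S_n = m) − (1/b_n)·g((m − a_n)/b_n)| ≤ δ_n/b_n + C·ε_n/v_n. Then condition (A') holds: there exist a constant C' ≥ 0 and a sequence δ'_n → 0 of nonnegative reals such that for all sufficiently large n, sup_{m,k ∈ ℤ, |m−k| ≤ v_n} |ℙ(S_n = m) − ℙ(S_n = k)| ≤ δ'_n/b_n + C'·ε_n/v_n. -/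
open MeasureTheory Filter Topology

theorem g_bdd' (g : ℝ → ℝ) (hg_nonneg : ∀ x, 0 ≤ g x) (hg_int : Integrable g)
    (hg_uc : UniformContinuous g) (hg_one : ∫ x, g x = 1) :
    ∃ B : ℝ, 0 ≤ B ∧ ∀ x, g x ≤ B := by
  obtain ⟨r, hr, hUC⟩ := Metric.uniformContinuous_iff.mp hg_uc 1 one_pos
  refine ⟨2/r + 1, by positivity, fun x => ?_⟩
  by_contra h
  push_neg at h
  have hI : ∀ y ∈ Set.Icc (x - r/2) (x + r/2), (2:ℝ)/r ≤ g y := by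
    intro y hy
    have hd : dist y x < r := by
      rw [Real.dist_eq]
      have := hy.1; have := hy.2
      rw [abs_lt]; constructor <;> linarith
    have := hUC hd
    rw [Real.dist_eq, abs_lt] at this
    linarith
  have h1 : ∫ y in Set.Icc (x - r/2) (x + r/2), (2:ℝ)/r ≤
      ∫ y in Set.Icc (x - r/2) (x + r/2), g y := by
    apply setIntegral_mono_on
    · exact integrableOn_const (by simp [Real.volume_Icc])
    · exact hg_int.integrableOn
    · exact measurableSet_Icc
    · exact hI
  have h2 : ∫ y in Set.Icc (x - r/2) (x + r/2), (2:ℝ)/r = 2 := by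
    rw [setIntegral_const, measureReal_def, Real.volume_Icc]
    rw [ENNReal.toReal_ofReal (by linarith : (0:ℝ) ≤ x + r/2 - (x - r/2))]
    rw [smul_eq_mul]
    field_simp
    ring
  have h3 : ∫ y in Set.Icc (x - r/2) (x + r/2), g y ≤ ∫ y, g y :=
    setIntegral_le_integral hg_int (Filter.Eventually.of_forall hg_nonneg)
  rw [hg_one] at h3
  linarith

/-- Theorem 2, direction (B') ⇒ (A'). -/
theorem mukhin_Bprime_implies_Aprime
    {Ω : Type*} [MeasurableSpace Ω] (μ : Measure Ω) [IsProbabilityMeasure μ]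
    (S : ℕ → Ω → ℤ) (hS : ∀ n, Measurable (S n))
    (a : ℕ → ℝ) (b : ℕ → ℝ) (hb : ∀ n, 0 < b n)
    (hbtop : Tendsto b atTop atTop)
    (g : ℝ → ℝ) (hg_nonneg : ∀ x, 0 ≤ g x) (hg_int : Integrable g)
    (hg_uc : UniformContinuous g) (hg_one : ∫ x, g x = 1)
    (G : ℝ → ℝ) (hG : ∀ x, G x = ∫ t in Set.Iic x, g t)
    (ε : ℕ → ℝ)
    (hε : ∀ n, ε n = ⨆ x : ℝ,
      |(μ {ω | (S n ω : ℝ) - a n < b n * x}).toReal - G x|)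
    (hε0 : Tendsto ε atTop (𝓝 0))
    (v : ℕ → ℕ) (hv : ∀ n, 0 < v n)
    (hvb : Tendsto (fun n => (v n : ℝ) / b n) atTop (𝓝 0))
    (hB : ∃ C : ℝ, 0 ≤ C ∧ ∃ δ : ℕ → ℝ, (∀ n, 0 ≤ δ n) ∧
      Tendsto δ atTop (𝓝 0) ∧
      ∀ᶠ n in atTop, ∀ m : ℤ,
        |(μ {ω | S n ω = m}).toReal - (1 / b n) * g (((m : ℝ) - a n) / b n)| ≤
          δ n / b n + C * ε n / v n) :
    ∃ C' : ℝ, 0 ≤ C' ∧ ∃ δ' : ℕ → ℝ, (∀ n, 0 ≤ δ' n) ∧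
      Tendsto δ' atTop (𝓝 0) ∧
      ∀ᶠ n in atTop, ∀ m k : ℤ, |m - k| ≤ (v n : ℤ) →
        |(μ {ω | S n ω = m}).toReal - (μ {ω | S n ω = k}).toReal| ≤
          δ' n / b n + C' * ε n / v n := by
  obtain ⟨C, hC, δ, hδ0, hδt, hBev⟩ := hB
  obtain ⟨B, hB0, hgB⟩ := g_bdd' g hg_nonneg hg_int hg_uc hg_one
  set w : ℝ → ℝ := fun t =>
    sSup ((fun p : ℝ × ℝ => |g p.1 - g p.2|) '' {p | |p.1 - p.2| ≤ t}) with hwdef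
  have hbdd : ∀ t : ℝ, BddAbove ((fun p : ℝ × ℝ => |g p.1 - g p.2|) '' {p | |p.1 - p.2| ≤ t}) := by
    intro t
    refine ⟨B, fun z hz => ?_⟩
    obtain ⟨p, _, rfl⟩ := hz
    rw [abs_sub_le_iff]
    have := hgB p.1; have := hgB p.2
    have := hg_nonneg p.1; have := hg_nonneg p.2
    constructor <;> linarith
  have hw0 : ∀ t : ℝ, 0 ≤ t → 0 ≤ w t := by
    intro t ht
    have hmem : |g 0 - g 0| ∈ (fun p : ℝ × ℝ => |g p.1 - g p.2|) '' {p | |p.1 - p.2| ≤ t} :=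
      ⟨(0, 0), by simpa using ht, rfl⟩
    simpa using le_csSup (hbdd t) hmem
  have hwle : ∀ t : ℝ, ∀ x y : ℝ, |x - y| ≤ t → |g x - g y| ≤ w t :=
    fun t x y hxy => le_csSup (hbdd t) ⟨(x, y), hxy, rfl⟩
  have hvbpos : ∀ n, 0 ≤ (v n : ℝ) / b n := fun n => div_nonneg (Nat.cast_nonneg _) (hb n).le
  -- tendsto of w ∘ (v/b)
  have hwt : Tendsto (fun n => w ((v n : ℝ) / b n)) atTop (𝓝 0) := by
    rw [Metric.tendsto_atTop]
    intro e he
    obtain ⟨r, hr, hUC⟩ := Metric.uniformContinuous_iff.mp hg_uc (e/2) (by linarith)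
    have hev : ∀ᶠ n in atTop, (v n : ℝ) / b n < r :=
      (hvb.eventually (eventually_lt_nhds hr)).mono (by simp)
    obtain ⟨N, hN⟩ := hev.exists_forall_of_atTop
    refine ⟨N, fun n hn => ?_⟩
    have hwn : w ((v n : ℝ) / b n) ≤ e / 2 := by
      apply Real.sSup_le
      · rintro z ⟨p, hp, rfl⟩
        have : dist p.1 p.2 < r := lt_of_le_of_lt (by simpa [Real.dist_eq] using hp) (hN n hn)
        have := hUC this
        rw [Real.dist_eq] at this
        linarith
      · linarith
    have h0 := hw0 _ (hvbpos n)
    rw [Real.dist_eq]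
    rw [abs_of_nonneg (by simpa using h0)]
    simpa using lt_of_le_of_lt hwn (by linarith)
  refine ⟨2 * C, by linarith, fun n => 2 * δ n + w ((v n : ℝ) / b n),
    fun n => by have := hδ0 n; have := hw0 _ (hvbpos n); linarith,
    by simpa using ((hδt.const_mul 2).add hwt), ?_⟩
  filter_upwards [hBev] with n hn m k hmk
  set q : ℤ → ℝ := fun i => (1 / b n) * g (((i : ℝ) - a n) / b n) with hq
  have hbn := hb n
  have key : |q m - q k| ≤ w ((v n : ℝ) / b n) / b n := by
    have hdist : |((m : ℝ) - a n) / b n - ((k : ℝ) - a n) / b n| ≤ (v n : ℝ) / b n := by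
      have : ((m : ℝ) - a n) / b n - ((k : ℝ) - a n) / b n = ((m : ℝ) - (k : ℝ)) / b n := by
        ring
      rw [this, abs_div, abs_of_pos hbn]
      have hnum : |(m : ℝ) - (k : ℝ)| ≤ (v n : ℝ) := by
        have : |(m : ℝ) - (k : ℝ)| = ((|m - k| : ℤ) : ℝ) := by push_cast; simp
        rw [this]
        exact_mod_cast hmk
      exact div_le_div_of_nonneg_right hnum hbn.le
    have hgd := hwle _ _ _ hdist
    have : |q m - q k| = (1 / b n) * |g (((m : ℝ) - a n) / b n) - g (((k : ℝ) - a n) / b n)| := by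
      rw [hq]
      rw [← mul_sub, abs_mul, abs_of_pos (by positivity : (0:ℝ) < 1 / b n)]
    rw [this]
    calc (1 / b n) * |g (((m : ℝ) - a n) / b n) - g (((k : ℝ) - a n) / b n)|
        ≤ (1 / b n) * w ((v n : ℝ) / b n) := by
          apply mul_le_mul_of_nonneg_left hgd (by positivity)
      _ = w ((v n : ℝ) / b n) / b n := by ring
  have h1 := hn m
  have h2 := hn k
  have habs : |(μ {ω | S n ω = m}).toReal - (μ {ω | S n ω = k}).toReal| ≤
      |(μ {ω | S n ω = m}).toReal - q m| + |q m - q k| + |q k - (μ {ω | S n ω = k}).toReal| := by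
    have := abs_sub_le ((μ {ω | S n ω = m}).toReal) (q m) ((μ {ω | S n ω = k}).toReal)
    have := abs_sub_le (q m) (q k) ((μ {ω | S n ω = k}).toReal)
    linarith [abs_sub_le ((μ {ω | S n ω = m}).toReal) (q m) ((μ {ω | S n ω = k}).toReal),
      abs_sub_le (q m) (q k) ((μ {ω | S n ω = k}).toReal)]
  rw [abs_sub_comm (q k)] at habs
  have : (2 * δ n + w ((v n : ℝ) / b n)) / b n + 2 * C * ε n / ↑(v n) =
      (δ n / b n + C * ε n / v n) + w ((v n : ℝ) / b n) / b n + (δ n / b n + C * ε n / v n) := by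
    ring
  rw [this]
  exact habs.trans (by linarith)
end

section
/- (Theorem 2, full equivalence). Under the setup below, the following two conditions are equivalent. (A'): there exist a constant C ≥ 0 and a sequence δ_n → 0 of nonnegative reals such that for all sufficiently large n, sup_{m,k ∈ ℤ, |m−k| ≤ v_n} |ℙ(S_n = m) − ℙ(S_n = k)| ≤ δ_n/b_n + C·ε_n/v_n. (B'): there exist a constant C' ≥ 0 and a sequence δ'_n → 0 of nonnegative reals such that for all sufficiently large n, sup_{m ∈ ℤ} |ℙ(S_n = m) − (1/b_n)·g((m − a_n)/b_n)| ≤ δ'_n/b_n + C'·ε_n/v_n. -/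
open MeasureTheory Filter Topology

lemma aux_bdd (g : ℝ → ℝ) (hg_nonneg : ∀ x, 0 ≤ g x) (hg_int : Integrable g)
    (hg_uc : UniformContinuous g) (hg_one : ∫ x, g x = 1) :
    ∃ M : ℝ, 0 ≤ M ∧ ∀ x, |g x| ≤ M := by
  obtain ⟨θ, hθ, hθ'⟩ := Metric.uniformContinuous_iff.mp hg_uc 1 one_pos
  refine ⟨1 + 1/θ, by positivity, fun x => ?_⟩
  rw [abs_of_nonneg (hg_nonneg x)]
  have h1 : ∀ t ∈ Set.Icc (x - θ/2) (x + θ/2), g x - 1 ≤ g t := by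
    intro t ht
    have hd : dist x t < θ := by
      rw [Real.dist_eq, abs_sub_lt_iff]
      obtain ⟨ha, hb⟩ := ht
      constructor <;> linarith
    have h2 := hθ' hd
    rw [Real.dist_eq, abs_sub_lt_iff] at h2
    linarith [h2.1]
  have h2 : ∫ _t in Set.Icc (x - θ/2) (x + θ/2), (g x - 1) ≤
      ∫ t in Set.Icc (x - θ/2) (x + θ/2), g t := by
    refine setIntegral_mono_on ?_ hg_int.integrableOn measurableSet_Icc h1
    exact integrableOn_const measure_Icc_lt_top.ne
  have h3 : ∫ t in Set.Icc (x - θ/2) (x + θ/2), g t ≤ 1 := by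
    rw [← hg_one]
    exact setIntegral_le_integral hg_int (ae_of_all _ hg_nonneg)
  rw [setIntegral_const, smul_eq_mul, measureReal_def, Real.volume_Icc] at h2
  have hvol : (ENNReal.ofReal (x + θ/2 - (x - θ/2))).toReal = θ := by
    rw [ENNReal.toReal_ofReal (by linarith)]; ring
  rw [hvol] at h2
  have h4 : θ * (g x - 1) ≤ 1 := le_trans h2 h3
  have h5 : g x - 1 ≤ 1/θ := by
    rw [le_div_iff₀ hθ]; linarith [mul_comm θ (g x - 1)]
  linarith

lemma aux_modulus (g : ℝ → ℝ) (hg_uc : UniformContinuous g) (M : ℝ) (hM : ∀ x, |g x| ≤ M)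
    (h : ℕ → ℝ) (hh0 : ∀ n, 0 ≤ h n) (hh : Tendsto h atTop (𝓝 0)) :
    ∃ e : ℕ → ℝ, (∀ n, 0 ≤ e n) ∧ Tendsto e atTop (𝓝 0) ∧
      ∀ n s t, |s - t| ≤ h n → |g s - g t| ≤ e n := by
  set A : ℝ → Set ℝ := fun r => {y | ∃ s t : ℝ, |s - t| ≤ r ∧ y = |g s - g t|} with hA
  have hmem : ∀ n, (0:ℝ) ∈ A (h n) := fun n => ⟨0, 0, by simpa using hh0 n, by simp⟩
  have hbdd : ∀ r, BddAbove (A r) := by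
    intro r
    refine ⟨2*M, fun y hy => ?_⟩
    obtain ⟨s, t, -, rfl⟩ := hy
    calc |g s - g t| ≤ |g s| + |g t| := abs_sub _ _
    _ ≤ 2*M := by linarith [hM s, hM t]
  have he0 : ∀ n, 0 ≤ sSup (A (h n)) := fun n => le_csSup (hbdd _) (hmem n)
  refine ⟨fun n => sSup (A (h n)), he0, ?_, ?_⟩
  · rw [Metric.tendsto_atTop]
    intro η hη
    obtain ⟨θ, hθ, hθ'⟩ := Metric.uniformContinuous_iff.mp hg_uc (η/2) (by linarith)
    obtain ⟨N, hN⟩ := Metric.tendsto_atTop.mp hh θ hθ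
    refine ⟨N, fun n hn => ?_⟩
    have hsup : sSup (A (h n)) ≤ η/2 := by
      apply Real.sSup_le _ (by linarith)
      rintro y ⟨s, t, hst, rfl⟩
      have hd : dist s t < θ := by
        rw [Real.dist_eq]
        calc |s - t| ≤ h n := hst
        _ < θ := by
            have h6 := hN n hn
            rwa [Real.dist_eq, sub_zero, abs_of_nonneg (hh0 n)] at h6
      have := hθ' hd
      rw [Real.dist_eq] at this
      linarith
    rw [Real.dist_eq, sub_zero, abs_of_nonneg (he0 n)]
    linarith
  · intro n s t hst
    exact le_csSup (hbdd _) ⟨s, t, hst, rfl⟩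

lemma aux_sum {Ω : Type*} [MeasurableSpace Ω] (μ : Measure Ω) [IsProbabilityMeasure μ]
    (T : Ω → ℤ) (hT : Measurable T) (m : ℤ) :
    ∀ V : ℕ, (μ {ω | (T ω : ℝ) < (m:ℝ) + V}).toReal =
      (μ {ω | (T ω : ℝ) < (m:ℝ)}).toReal +
        ∑ j ∈ Finset.range V, (μ {ω | T ω = m + (j:ℤ)}).toReal := by
  intro V
  induction V with
  | zero => simp
  | succ V ih =>
    have hset : {ω | (T ω : ℝ) < (m:ℝ) + (V+1:ℕ)} =
        {ω | (T ω : ℝ) < (m:ℝ) + (V:ℕ)} ∪ {ω | T ω = m + (V:ℤ)} := by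
      ext ω
      simp only [Set.mem_setOf_eq, Set.mem_union]
      constructor
      · intro hlt
        have h1 : T ω < m + (V+1 : ℕ) := by exact_mod_cast hlt
        have h2 : T ω < m + (V:ℕ) ∨ T ω = m + (V:ℤ) := by omega
        rcases h2 with h2 | h2
        · left; exact_mod_cast h2
        · right; exact h2
      · intro hlt
        rcases hlt with h2 | h2
        · have h1 : T ω < m + (V:ℕ) := by exact_mod_cast h2
          have : T ω < m + (V+1:ℕ) := by omega
          exact_mod_cast this
        · have : T ω < m + (V+1:ℕ) := by omega
          exact_mod_cast this
    have hdisj : Disjoint {ω | (T ω : ℝ) < (m:ℝ) + (V:ℕ)} {ω | T ω = m + (V:ℤ)} := by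
      rw [Set.disjoint_left]
      intro ω h1 h2
      simp only [Set.mem_setOf_eq] at h1 h2
      rw [h2] at h1
      push_cast at h1
      linarith
    have hmeas : MeasurableSet {ω | T ω = m + (V:ℤ)} :=
      hT (measurableSet_singleton (m + (V:ℤ)))
    rw [hset, measure_union hdisj hmeas,
      ENNReal.toReal_add (measure_ne_top μ _) (measure_ne_top μ _), ih,
      Finset.sum_range_succ]
    ring


/-- Theorem 2, full equivalence (A') ⇔ (B'). -/
theorem mukhin_Aprime_iff_Bprime
    {Ω : Type*} [MeasurableSpace Ω] (μ : Measure Ω) [IsProbabilityMeasure μ]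
    (S : ℕ → Ω → ℤ) (hS : ∀ n, Measurable (S n))
    (a : ℕ → ℝ) (b : ℕ → ℝ) (hb : ∀ n, 0 < b n)
    (hbtop : Tendsto b atTop atTop)
    (g : ℝ → ℝ) (hg_nonneg : ∀ x, 0 ≤ g x) (hg_int : Integrable g)
    (hg_uc : UniformContinuous g) (hg_one : ∫ x, g x = 1)
    (G : ℝ → ℝ) (hG : ∀ x, G x = ∫ t in Set.Iic x, g t)
    (ε : ℕ → ℝ)
    (hε : ∀ n, ε n = ⨆ x : ℝ,
      |(μ {ω | (S n ω : ℝ) - a n < b n * x}).toReal - G x|)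
    (hε0 : Tendsto ε atTop (𝓝 0))
    (v : ℕ → ℕ) (hv : ∀ n, 0 < v n)
    (hvb : Tendsto (fun n => (v n : ℝ) / b n) atTop (𝓝 0)) :
    (∃ C : ℝ, 0 ≤ C ∧ ∃ δ : ℕ → ℝ, (∀ n, 0 ≤ δ n) ∧
      Tendsto δ atTop (𝓝 0) ∧
      ∀ᶠ n in atTop, ∀ m k : ℤ, |m - k| ≤ (v n : ℤ) →
        |(μ {ω | S n ω = m}).toReal - (μ {ω | S n ω = k}).toReal| ≤
          δ n / b n + C * ε n / v n) ↔
    (∃ C' : ℝ, 0 ≤ C' ∧ ∃ δ' : ℕ → ℝ, (∀ n, 0 ≤ δ' n) ∧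
      Tendsto δ' atTop (𝓝 0) ∧
      ∀ᶠ n in atTop, ∀ m : ℤ,
        |(μ {ω | S n ω = m}).toReal - (1 / b n) * g (((m : ℝ) - a n) / b n)| ≤
          δ' n / b n + C' * ε n / v n) := by
  obtain ⟨M, hM0, hM⟩ := aux_bdd g hg_nonneg hg_int hg_uc hg_one
  have hh0 : ∀ n, 0 ≤ (v n : ℝ) / b n := fun n => div_nonneg (Nat.cast_nonneg _) (hb n).le
  obtain ⟨e, he0, he_lim, he⟩ := aux_modulus g hg_uc M hM (fun n => (v n : ℝ) / b n) hh0 hvb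
  have hvpos : ∀ n, (0:ℝ) < (v n : ℝ) := fun n => by exact_mod_cast hv n
  constructor
  · rintro ⟨C, hC, δ, hδ0, hδlim, hA⟩
    -- prerequisites: CDF proximity
    have hFle1 : ∀ s : Set Ω, (μ s).toReal ≤ 1 := fun s => by
      have h1 : μ s ≤ 1 := prob_le_one
      have := ENNReal.toReal_mono ENNReal.one_ne_top h1
      simpa using this
    have hG0 : ∀ x, 0 ≤ G x := fun x => by
      rw [hG]; exact setIntegral_nonneg measurableSet_Iic fun t _ => hg_nonneg t
    have hG1 : ∀ x, G x ≤ 1 := fun x => by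
      rw [hG, ← hg_one]
      exact setIntegral_le_integral hg_int (ae_of_all _ hg_nonneg)
    have hFbd : ∀ n x, |(μ {ω | (S n ω : ℝ) - a n < b n * x}).toReal - G x| ≤ ε n := by
      intro n x
      rw [hε n]
      have hbdd : BddAbove (Set.range fun x : ℝ =>
          |(μ {ω | (S n ω : ℝ) - a n < b n * x}).toReal - G x|) := by
        refine ⟨1, ?_⟩
        rintro y ⟨x', rfl⟩
        have h1 := hFle1 {ω | (S n ω : ℝ) - a n < b n * x'}
        have h2 := ENNReal.toReal_nonneg (a := μ {ω | (S n ω : ℝ) - a n < b n * x'})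
        rw [abs_sub_le_iff]
        constructor <;> [linarith [hG0 x']; linarith [hG1 x']]
      exact le_ciSup hbdd x
    refine ⟨C + 2, by linarith, fun n => δ n + e n,
      fun n => by have := hδ0 n; have := he0 n; show (0:ℝ) ≤ δ n + e n; linarith,
      by simpa using hδlim.add he_lim, ?_⟩
    filter_upwards [hA] with n hn
    intro m
    set bn := b n with hbn
    have hbpos := hb n
    have hbne : bn ≠ 0 := hbpos.ne'
    set x₁ : ℝ := ((m:ℝ) - a n) / bn with hx₁
    set x₂ : ℝ := ((m:ℝ) + (v n : ℝ) - a n) / bn with hx₂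
    have hxx : x₂ - x₁ = (v n : ℝ) / bn := by
      rw [hx₁, hx₂, div_sub_div_same]; congr 1; ring
    have h12 : x₁ ≤ x₂ := by nlinarith [hvpos n, div_pos (hvpos n) hbpos, hxx]
    set P : ℤ → ℝ := fun k => (μ {ω | S n ω = k}).toReal with hP
    -- set rewrites
    have hset1 : {ω | (S n ω : ℝ) - a n < bn * x₁} = {ω | (S n ω : ℝ) < (m:ℝ)} := by
      ext ω
      simp only [Set.mem_setOf_eq, hx₁, mul_div_cancel₀ _ hbne]
      constructor <;> intro h <;> linarith
    have hset2 : {ω | (S n ω : ℝ) - a n < bn * x₂} =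
        {ω | (S n ω : ℝ) < (m:ℝ) + (v n : ℝ)} := by
      ext ω
      simp only [Set.mem_setOf_eq, hx₂, mul_div_cancel₀ _ hbne]
      constructor <;> intro h <;> linarith
    set Q1 : ℝ := (μ {ω | (S n ω : ℝ) < (m:ℝ)}).toReal with hQ1
    set Q2 : ℝ := (μ {ω | (S n ω : ℝ) < (m:ℝ) + (v n : ℝ)}).toReal with hQ2
    have hF1 : |Q1 - G x₁| ≤ ε n := by rw [hQ1, ← hset1]; exact hFbd n x₁
    have hF2 : |Q2 - G x₂| ≤ ε n := by rw [hQ2, ← hset2]; exact hFbd n x₂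
    have hsum : Q2 = Q1 + ∑ j ∈ Finset.range (v n), P (m + (j:ℤ)) := by
      have := aux_sum μ (S n) (hS n) m (v n)
      simpa [hQ1, hQ2, hP] using this
    -- integral estimate
    have hGdiff : G x₂ - G x₁ = ∫ t in Set.Ioc x₁ x₂, g t := by
      rw [hG, hG, intervalIntegral.integral_Iic_sub_Iic hg_int.integrableOn hg_int.integrableOn,
        intervalIntegral.integral_of_le h12]
    have hconst : ∫ _t in Set.Ioc x₁ x₂, g x₁ = (x₂ - x₁) * g x₁ := by
      rw [setIntegral_const, smul_eq_mul, measureReal_def, Real.volume_Ioc,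
        ENNReal.toReal_ofReal (by linarith)]
    have hint : |(G x₂ - G x₁) - (x₂ - x₁) * g x₁| ≤ e n * ((v n : ℝ) / bn) := by
      rw [hGdiff, ← hconst,
        ← integral_sub hg_int.integrableOn
          (integrableOn_const measure_Ioc_lt_top.ne)]
      have hb1 : ∀ t ∈ Set.Ioc x₁ x₂, ‖g t - g x₁‖ ≤ e n := by
        intro t ht
        rw [Real.norm_eq_abs]
        refine he n t x₁ ?_
        rw [abs_of_nonneg (by linarith [ht.1])]
        have := ht.2
        calc t - x₁ ≤ x₂ - x₁ := by linarith
        _ = (v n : ℝ) / bn := hxx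
      have := norm_setIntegral_le_of_norm_le_const (μ := volume)
        measure_Ioc_lt_top hb1
      rw [Real.norm_eq_abs, measureReal_def, Real.volume_Ioc, ENNReal.toReal_ofReal (by linarith)] at this
      calc |∫ t in Set.Ioc x₁ x₂, (g t - g x₁)| ≤ e n * (x₂ - x₁) := this
      _ = e n * ((v n : ℝ) / bn) := by rw [hxx]
    -- A' sum bound
    have hAsum : |∑ j ∈ Finset.range (v n), (P m - P (m + (j:ℤ)))| ≤
        (v n : ℝ) * (δ n / bn + C * ε n / (v n : ℝ)) := by
      calc |∑ j ∈ Finset.range (v n), (P m - P (m + (j:ℤ)))|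
          ≤ ∑ j ∈ Finset.range (v n), |P m - P (m + (j:ℤ))| :=
            Finset.abs_sum_le_sum_abs _ _
      _ ≤ ∑ _j ∈ Finset.range (v n), (δ n / bn + C * ε n / (v n : ℝ)) := by
            refine Finset.sum_le_sum fun j hj => ?_
            refine hn m (m + (j:ℤ)) ?_
            have hj' : (j:ℤ) < (v n : ℤ) := by exact_mod_cast Finset.mem_range.mp hj
            have : m - (m + (j:ℤ)) = -(j:ℤ) := by ring
            rw [this, abs_neg, abs_of_nonneg (Int.natCast_nonneg j)]
            omega
      _ = (v n : ℝ) * (δ n / bn + C * ε n / (v n : ℝ)) := by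
            rw [Finset.sum_const, Finset.card_range, nsmul_eq_mul]
    -- combine
    have hVne : (v n : ℝ) ≠ 0 := (hvpos n).ne'
    have expand : (v n : ℝ) * (P m - (1 / bn) * g x₁) =
        (∑ j ∈ Finset.range (v n), (P m - P (m + (j:ℤ))))
        + ((Q2 - G x₂) - (Q1 - G x₁))
        + ((G x₂ - G x₁) - (x₂ - x₁) * g x₁) := by
      have hs : ∑ j ∈ Finset.range (v n), (P m - P (m + (j:ℤ))) =
          (v n : ℝ) * P m - (Q2 - Q1) := by
        rw [Finset.sum_sub_distrib, Finset.sum_const, Finset.card_range, nsmul_eq_mul]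
        have hss : ∑ j ∈ Finset.range (v n), P (m + (j:ℤ)) = Q2 - Q1 := by
          rw [hsum]; ring
        rw [hss]
      rw [hs, hxx]
      field_simp
      ring
    have key : |(v n : ℝ) * (P m - (1 / bn) * g x₁)| ≤
        (v n : ℝ) * (δ n / bn + C * ε n / (v n : ℝ)) + 2 * ε n + e n * ((v n : ℝ) / bn) := by
      rw [expand]
      calc |(∑ j ∈ Finset.range (v n), (P m - P (m + (j:ℤ))))
          + ((Q2 - G x₂) - (Q1 - G x₁)) + ((G x₂ - G x₁) - (x₂ - x₁) * g x₁)|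
          ≤ |∑ j ∈ Finset.range (v n), (P m - P (m + (j:ℤ)))|
            + |(Q2 - G x₂) - (Q1 - G x₁)| + |(G x₂ - G x₁) - (x₂ - x₁) * g x₁| :=
            abs_add_three _ _ _
      _ ≤ (v n : ℝ) * (δ n / bn + C * ε n / (v n : ℝ)) + 2 * ε n + e n * ((v n : ℝ) / bn) := by
          refine add_le_add (add_le_add hAsum ?_) hint
          calc |(Q2 - G x₂) - (Q1 - G x₁)| ≤ |Q2 - G x₂| + |Q1 - G x₁| := abs_sub _ _
          _ ≤ 2 * ε n := by linarith
    have hfin : |P m - (1 / bn) * g x₁| * (v n : ℝ) ≤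
        ((δ n + e n) / bn + (C + 2) * ε n / (v n : ℝ)) * (v n : ℝ) := by
      calc |P m - (1 / bn) * g x₁| * (v n : ℝ)
          = |(v n : ℝ) * (P m - (1 / bn) * g x₁)| := by
            rw [abs_mul, abs_of_pos (hvpos n)]; ring
      _ ≤ (v n : ℝ) * (δ n / bn + C * ε n / (v n : ℝ)) + 2 * ε n + e n * ((v n : ℝ) / bn) :=
            key
      _ = ((δ n + e n) / bn + (C + 2) * ε n / (v n : ℝ)) * (v n : ℝ) := by
            field_simp
            ring
    exact le_of_mul_le_mul_right hfin (hvpos n)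
  · rintro ⟨C', hC', δ', hδ'0, hδ'lim, hB⟩
    refine ⟨2 * C', by linarith, fun n => 2 * δ' n + e n,
      fun n => by have := hδ'0 n; have := he0 n; show (0:ℝ) ≤ 2 * δ' n + e n; linarith,
      by simpa using (hδ'lim.const_mul 2).add he_lim, ?_⟩
    filter_upwards [hB] with n hn
    intro m k hmk
    set bn := b n with hbn
    have hbpos := hb n
    set P : ℤ → ℝ := fun k => (μ {ω | S n ω = k}).toReal with hP
    set xm : ℝ := ((m:ℝ) - a n) / bn with hxm
    set xk : ℝ := ((k:ℝ) - a n) / bn with hxk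
    have hx : |xm - xk| ≤ (v n : ℝ) / bn := by
      rw [hxm, hxk, div_sub_div_same]
      have h1 : (m:ℝ) - a n - ((k:ℝ) - a n) = ((m - k : ℤ) : ℝ) := by push_cast; ring
      rw [h1, abs_div, abs_of_pos hbpos]
      have h2 : |((m - k : ℤ) : ℝ)| ≤ (v n : ℝ) := by
        rw [← Int.cast_abs]
        exact_mod_cast hmk
      gcongr
    have hgg : |g xm - g xk| ≤ e n := he n xm xk hx
    have h1 := hn m
    have h2 := hn k
    have hexp : P m - P k = (P m - (1 / bn) * g xm)
        + ((1 / bn) * g xm - (1 / bn) * g xk) + ((1 / bn) * g xk - P k) := by ring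
    have hobpos : (0:ℝ) < 1 / bn := by positivity
    have hmid : |(1 / bn) * g xm - (1 / bn) * g xk| ≤ (1 / bn) * e n := by
      rw [← mul_sub, abs_mul, abs_of_pos hobpos]
      exact mul_le_mul_of_nonneg_left hgg hobpos.le
    have h3 : |(1 / bn) * g xk - P k| ≤ δ' n / bn + C' * ε n / (v n : ℝ) := by
      rw [abs_sub_comm]; exact h2
    have heq : (δ' n / bn + C' * ε n / (v n : ℝ)) + (1 / bn) * e n
        + (δ' n / bn + C' * ε n / (v n : ℝ))
        = (2 * δ' n + e n) / bn + 2 * C' * ε n / (v n : ℝ) := by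
      field_simp
      ring
    have htri : |P m - P k| ≤ |P m - (1 / bn) * g xm|
        + |(1 / bn) * g xm - (1 / bn) * g xk| + |(1 / bn) * g xk - P k| := by
      rw [hexp]; exact abs_add_three _ _ _
    linarith [h1, hmid, h3, htri]
end

section
/- (Theorem 1, Mukhin's criterion, direction (B) ⇒ (A)). Under the setup below, suppose the local limit theorem holds: sup_{m ∈ ℤ} |ℙ(S_n = m) − (1/b_n)·g((m − a_n)/b_n)| = o(1/b_n) as n → ∞. Then for every sequence of positive integers (v_n) with v_n/b_n → 0 one has sup_{m ∈ ℤ} |ℙ(S_n = m + v_n) − ℙ(S_n = m)| = o(1/b_n) as n → ∞. -/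
/-!
Shifting `m` by `v n` moves the argument of `g` in the local approximation `g ((m - a n) / b n) / b n`
by `v n / b n → 0`, so by uniform continuity of `g` the two approximations differ by `o(1 / b n)`
uniformly in `m`; the local limit theorem adds two more errors of size `o(1 / b n)`.
-/

open MeasureTheory Filter Topology

theorem UniformContinuous.eventually_forall_dist_add_lt {ι E F : Type*}
    [SeminormedAddCommGroup E] [PseudoMetricSpace F] {g : E → F} (hg : UniformContinuous g)
    {l : Filter ι} {c : ι → E} (hc : Tendsto c l (𝓝 0)) {ε : ℝ} (hε : 0 < ε) :
    ∀ᶠ i in l, ∀ x, dist (g (x + c i)) (g x) < ε := by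
  obtain ⟨δ, hδ, hδg⟩ := Metric.uniformContinuous_iff.mp hg ε hε
  filter_upwards [hc.eventually (Metric.ball_mem_nhds 0 hδ)] with i hi x
  exact hδg (by simpa [dist_eq_norm] using hi)

theorem abs_sub_le_abs_sub_add_of_forall_abs_sub_le {α : Type*} {f h : α → ℝ} {δ : ℝ}
    (hfh : ∀ x, |f x - h x| ≤ δ) (x y : α) :
    |f x - f y| ≤ |h x - h y| + 2 * δ := by
  have hy : |h y - f y| ≤ δ := abs_sub_comm (f y) (h y) ▸ hfh y
  linarith [hfh x, abs_sub_le (f x) (h x) (h y), abs_sub_le (f x) (h y) (f y)]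

theorem abs_sub_rescaled_shift (g : ℝ → ℝ) (a : ℝ) {b : ℝ} (hb : 0 < b) (x k : ℝ) :
    |1 / b * g ((x + k - a) / b) - 1 / b * g ((x - a) / b)| =
      |g ((x - a) / b + k / b) - g ((x - a) / b)| / b := by
  rw [← mul_sub, abs_mul, abs_of_pos (one_div_pos.mpr hb), add_sub_right_comm, add_div]
  ring

theorem mukhin_B_implies_A_general
    {Ω : Type*} [MeasurableSpace Ω] (μ : Measure Ω)
    (S : ℕ → Ω → ℤ)
    (a : ℕ → ℝ) (b : ℕ → ℝ) (hb : ∀ n, 0 < b n)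
    (g : ℝ → ℝ)
    (hg_uc : UniformContinuous g)
    (hLLT : ∀ η > (0 : ℝ), ∀ᶠ n in atTop, ∀ m : ℤ,
      |(μ {ω | S n ω = m}).toReal - (1 / b n) * g (((m : ℝ) - a n) / b n)| ≤
        η / b n) :
    ∀ v : ℕ → ℕ, (∀ n, 0 < v n) →
      Tendsto (fun n => (v n : ℝ) / b n) atTop (𝓝 0) →
      ∀ η > (0 : ℝ), ∀ᶠ n in atTop, ∀ m : ℤ,
        |(μ {ω | S n ω = m + (v n : ℤ)}).toReal - (μ {ω | S n ω = m}).toReal| ≤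
          η / b n := by
  intro v _ hvb η hη
  have hshift := hg_uc.eventually_forall_dist_add_lt hvb (ε := η / 3) (by positivity)
  filter_upwards [hLLT (η / 3) (by positivity), hshift] with n hLLTn hshiftn m
  have hbn := hb n
  have hdensity : |1 / b n * g ((m + v n - a n) / b n) - 1 / b n * g ((m - a n) / b n)| ≤
      η / 3 / b n := by
    rw [abs_sub_rescaled_shift g (a n) hbn]
    exact div_le_div_of_nonneg_right (hshiftn _).le hbn.le
  calc _ ≤ η / 3 / b n + 2 * (η / 3 / b n) := by
        have := abs_sub_le_abs_sub_add_of_forall_abs_sub_le hLLTn (m + v n) m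
        push_cast at this
        linarith
    _ = η / b n := by ring

/-- Theorem 1, direction (B) ⇒ (A): the local limit theorem implies the
shift-equidistribution property along every sequence `v n = o(b n)`. -/
theorem mukhin_B_implies_A
    {Ω : Type*} [MeasurableSpace Ω] (μ : Measure Ω) [IsProbabilityMeasure μ]
    (S : ℕ → Ω → ℤ) (hS : ∀ n, Measurable (S n))
    (a : ℕ → ℝ) (b : ℕ → ℝ) (hb : ∀ n, 0 < b n)
    (hbtop : Tendsto b atTop atTop)
    (g : ℝ → ℝ) (hg_nonneg : ∀ x, 0 ≤ g x) (hg_int : Integrable g)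
    (hg_uc : UniformContinuous g) (hg_one : ∫ x, g x = 1)
    (G : ℝ → ℝ) (hG : ∀ x, G x = ∫ t in Set.Iic x, g t)
    (hweak : Tendsto (fun n => ⨆ x : ℝ,
      |(μ {ω | (S n ω : ℝ) - a n < b n * x}).toReal - G x|) atTop (𝓝 0))
    (hLLT : ∀ η > (0 : ℝ), ∀ᶠ n in atTop, ∀ m : ℤ,
      |(μ {ω | S n ω = m}).toReal - (1 / b n) * g (((m : ℝ) - a n) / b n)| ≤
        η / b n) :
    ∀ v : ℕ → ℕ, (∀ n, 0 < v n) →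
      Tendsto (fun n => (v n : ℝ) / b n) atTop (𝓝 0) →
      ∀ η > (0 : ℝ), ∀ᶠ n in atTop, ∀ m : ℤ,
        |(μ {ω | S n ω = m + (v n : ℤ)}).toReal - (μ {ω | S n ω = m}).toReal| ≤
          η / b n :=
  mukhin_B_implies_A_general μ S a b hb g hg_uc hLLT
end

section
/- (Interval probability estimate, step (I) in the proof of Theorem 2). Under the setup below, there exist a constant C ≥ 0 and a sequence δ_n → 0 of nonnegative reals such that for all sufficiently large n and all m ∈ ℤ, |ℙ(m ≤ S_n ≤ m + v_n − 1) − ((v_n − 1)/b_n)·g((m − a_n)/b_n)| ≤ ((v_n − 1)/b_n)·δ_n + C·ε_n. -/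
open MeasureTheory Filter Topology

lemma g_bdd_aux {g : ℝ → ℝ} (hg_nonneg : ∀ x, 0 ≤ g x) (hg_int : Integrable g)
    (hg_uc : UniformContinuous g) (hg_one : ∫ x, g x = 1) :
    ∃ B : ℝ, 0 < B ∧ ∀ x, g x ≤ B := by
  obtain ⟨r, hr, hruc⟩ := Metric.uniformContinuous_iff.mp hg_uc 1 one_pos
  refine ⟨1 + 2 / r, by positivity, fun x => ?_⟩
  have hlow : ∀ t ∈ Set.Ioc x (x + r / 2), g x - 1 ≤ g t := by
    intro t ht
    have hd : dist t x < r := by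
      rw [Real.dist_eq, abs_of_nonneg (by linarith [ht.1])]
      linarith [ht.2]
    have := hruc hd
    rw [Real.dist_eq] at this
    have := abs_lt.mp this
    linarith [this.2]
  have h1 : ∫ t in Set.Ioc x (x + r / 2), (g x - 1) ≤ ∫ t in Set.Ioc x (x + r / 2), g t := by
    apply setIntegral_mono_on
    · exact integrableOn_const measure_Ioc_lt_top.ne
    · exact hg_int.integrableOn
    · exact measurableSet_Ioc
    · exact hlow
  have h2 : ∫ t in Set.Ioc x (x + r / 2), g t ≤ 1 := by
    rw [← hg_one]
    exact setIntegral_le_integral hg_int (Filter.Eventually.of_forall hg_nonneg)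
  have h3 : ∫ t in Set.Ioc x (x + r / 2), (g x - 1) = (r / 2) * (g x - 1) := by
    rw [setIntegral_const, measureReal_def, Real.volume_Ioc, smul_eq_mul]
    congr 1
    rw [ENNReal.toReal_ofReal (by linarith)]
    ring
  rw [h3] at h1
  have hr2 : (0:ℝ) < r / 2 := by linarith
  have : (r / 2) * (g x - 1) ≤ 1 := le_trans h1 h2
  have h9 : g x - 1 ≤ 2 / r := by
    rw [le_div_iff₀ hr]; nlinarith
  linarith

/-- Interval probability estimate, step (I) in the proof of Theorem 2. -/
theorem interval_probability_estimate
    {Ω : Type*} [MeasurableSpace Ω] (μ : Measure Ω) [IsProbabilityMeasure μ]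
    (S : ℕ → Ω → ℤ) (hS : ∀ n, Measurable (S n))
    (a : ℕ → ℝ) (b : ℕ → ℝ) (hb : ∀ n, 0 < b n)
    (hbtop : Tendsto b atTop atTop)
    (g : ℝ → ℝ) (hg_nonneg : ∀ x, 0 ≤ g x) (hg_int : Integrable g)
    (hg_uc : UniformContinuous g) (hg_one : ∫ x, g x = 1)
    (G : ℝ → ℝ) (hG : ∀ x, G x = ∫ t in Set.Iic x, g t)
    (ε : ℕ → ℝ)
    (hε : ∀ n, ε n = ⨆ x : ℝ,
      |(μ {ω | (S n ω : ℝ) - a n < b n * x}).toReal - G x|)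
    (hε0 : Tendsto ε atTop (𝓝 0))
    (v : ℕ → ℕ) (hv : ∀ n, 0 < v n)
    (hvb : Tendsto (fun n => (v n : ℝ) / b n) atTop (𝓝 0)) :
    ∃ C : ℝ, 0 ≤ C ∧ ∃ δ : ℕ → ℝ, (∀ n, 0 ≤ δ n) ∧
      Tendsto δ atTop (𝓝 0) ∧
      ∀ᶠ n in atTop, ∀ m : ℤ,
        |(μ {ω | m ≤ S n ω ∧ S n ω ≤ m + (v n : ℤ) - 1}).toReal -
            (((v n : ℝ) - 1) / b n) * g (((m : ℝ) - a n) / b n)| ≤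
          (((v n : ℝ) - 1) / b n) * δ n + C * ε n := by
  classical
  obtain ⟨B, hB, hgB⟩ := g_bdd_aux hg_nonneg hg_int hg_uc hg_one
  -- modulus of continuity
  set K : ℝ → Set ℝ := fun r => (fun p : ℝ × ℝ => |g p.1 - g p.2|) '' {p | |p.1 - p.2| ≤ r}
    with hK
  have hKmem : ∀ r, 0 ≤ r → (0:ℝ) ∈ K r := by
    intro r hr
    exact ⟨(0, 0), by simpa using hr, by simp⟩
  have hKbdd : ∀ r, BddAbove (K r) := by
    intro r
    refine ⟨2 * B, ?_⟩
    rintro y ⟨⟨s, t⟩, -, rfl⟩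
    have h1 := hg_nonneg s; have h2 := hg_nonneg t
    have h3 := hgB s; have h4 := hgB t
    simp only
    rw [abs_sub_le_iff]
    constructor <;> linarith
  set δ : ℕ → ℝ := fun n => sSup (K ((v n : ℝ) / b n)) with hδdef
  have hvbnn : ∀ n, (0:ℝ) ≤ (v n : ℝ) / b n := fun n =>
    div_nonneg (Nat.cast_nonneg _) (hb n).le
  have hδ0 : ∀ n, 0 ≤ δ n := fun n => le_csSup (hKbdd _) (hKmem _ (hvbnn n))
  have hδ_bound : ∀ n (s t : ℝ), |s - t| ≤ (v n : ℝ) / b n → |g s - g t| ≤ δ n := by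
    intro n s t h
    exact le_csSup (hKbdd _) ⟨(s, t), h, rfl⟩
  have hδ_lim : Tendsto δ atTop (𝓝 0) := by
    rw [Metric.tendsto_atTop]
    intro η hη
    obtain ⟨ρ, hρ, hρuc⟩ := Metric.uniformContinuous_iff.mp hg_uc (η / 2) (by linarith)
    obtain ⟨N, hN⟩ := Metric.tendsto_atTop.mp hvb ρ hρ
    refine ⟨N, fun n hn => ?_⟩
    have h1 : δ n ≤ η / 2 := by
      apply csSup_le ⟨0, hKmem _ (hvbnn n)⟩
      rintro y ⟨⟨s, t⟩, hst, rfl⟩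
      have : dist s t < ρ := by
        rw [Real.dist_eq]
        have := hN n hn
        rw [Real.dist_eq, sub_zero, abs_of_nonneg (hvbnn n)] at this
        exact lt_of_le_of_lt hst this
      have := hρuc this
      rw [Real.dist_eq] at this
      simpa using this.le
    rw [Real.dist_eq, sub_zero, abs_of_nonneg (hδ0 n)]
    linarith
  refine ⟨6, by norm_num, δ, hδ0, hδ_lim, Filter.Eventually.of_forall fun n => fun m => ?_⟩
  -- basic facts
  have hbn := hb n
  have hG0 : ∀ x, 0 ≤ G x := fun x => by
    rw [hG]; exact setIntegral_nonneg measurableSet_Iic fun t _ => hg_nonneg t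
  have hG1 : ∀ x, G x ≤ 1 := fun x => by
    rw [hG, ← hg_one]
    exact setIntegral_le_integral hg_int (Filter.Eventually.of_forall hg_nonneg)
  have hGdiff : ∀ x y : ℝ, G y - G x = ∫ t in x..y, g t := fun x y => by
    rw [hG, hG]; exact intervalIntegral.integral_Iic_sub_Iic hg_int.integrableOn hg_int.integrableOn
  have hGlip : ∀ x y : ℝ, x ≤ y → G y - G x ≤ B * (y - x) := by
    intro x y hxy
    rw [hGdiff x y]
    calc (∫ t in x..y, g t) ≤ |∫ t in x..y, g t| := le_abs_self _
      _ ≤ B * |y - x| := by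
          simpa [Real.norm_eq_abs] using
            intervalIntegral.norm_integral_le_of_norm_le_const (a := x) (b := y) (C := B)
              (f := g) (fun t _ => by
                rw [Real.norm_eq_abs, abs_of_nonneg (hg_nonneg t)]; exact hgB t)
      _ = B * (y - x) := by rw [abs_of_nonneg (by linarith)]
  have fact1 : ∀ x : ℝ, |(μ {ω | (S n ω : ℝ) - a n < b n * x}).toReal - G x| ≤ ε n := by
    intro x
    rw [hε n]
    apply le_ciSup (f := fun x => |(μ {ω | (S n ω : ℝ) - a n < b n * x}).toReal - G x|)
    refine ⟨1, ?_⟩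
    rintro y ⟨x, rfl⟩
    have h1 : (μ {ω | (S n ω : ℝ) - a n < b n * x}).toReal ≤ 1 := by
      have := ENNReal.toReal_mono (ENNReal.one_ne_top) (prob_le_one (μ := μ) (s := {ω | (S n ω : ℝ) - a n < b n * x}))
      simpa using this
    have h2 := ENNReal.toReal_nonneg (a := μ {ω | (S n ω : ℝ) - a n < b n * x})
    have h3 := hG0 x; have h4 := hG1 x
    rw [abs_sub_le_iff]
    constructor <;> linarith
  have hFk : ∀ k : ℤ,
      (μ {ω | (S n ω : ℝ) - a n < b n * (((k : ℝ) - a n) / b n)}).toReal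
        = (μ {ω | S n ω < k}).toReal := by
    intro k
    congr 2
    ext ω
    simp only [Set.mem_setOf_eq]
    rw [mul_div_cancel₀ _ hbn.ne', sub_lt_sub_iff_right, Int.cast_lt]
  have fact2 : ∀ k : ℤ, |(μ {ω | S n ω < k}).toReal - G (((k : ℝ) - a n) / b n)| ≤ ε n := by
    intro k
    have h := fact1 (((k : ℝ) - a n) / b n)
    rwa [hFk k] at h
  have hεnn : 0 ≤ ε n := le_trans (abs_nonneg _) (fact2 0)
  have hsplit : ∀ k l : ℤ, k ≤ l →
      (μ {ω | S n ω < l}).toReal =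
        (μ {ω | S n ω < k}).toReal + (μ {ω | k ≤ S n ω ∧ S n ω ≤ l - 1}).toReal := by
    intro k l hkl
    have hmB : MeasurableSet {ω | k ≤ S n ω ∧ S n ω ≤ l - 1} := (hS n) measurableSet_Icc
    have hu : {ω | S n ω < l} = {ω | S n ω < k} ∪ {ω | k ≤ S n ω ∧ S n ω ≤ l - 1} := by
      ext ω; simp only [Set.mem_setOf_eq, Set.mem_union]; omega
    have hdisj : Disjoint {ω | S n ω < k} {ω | k ≤ S n ω ∧ S n ω ≤ l - 1} := by
      rw [Set.disjoint_left]
      intro ω h1 h2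
      simp only [Set.mem_setOf_eq] at h1 h2
      omega
    rw [hu, measure_union hdisj hmB,
      ENNReal.toReal_add (measure_ne_top μ _) (measure_ne_top μ _)]
  -- point mass bound
  have hpt : ∀ k : ℤ, (μ {ω | k ≤ S n ω ∧ S n ω ≤ k}).toReal ≤ 2 * ε n := by
    intro k
    have hsp := hsplit k (k + 1) (by omega)
    have hset : {ω | k ≤ S n ω ∧ S n ω ≤ k + 1 - 1} = {ω | k ≤ S n ω ∧ S n ω ≤ k} := by
      ext ω; simp only [Set.mem_setOf_eq]; omega
    rw [hset] at hsp
    have key : ∀ η : ℝ, 0 < η →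
        (μ {ω | S n ω < k + 1}).toReal ≤ G (((k : ℝ) - a n) / b n) + ε n + η := by
      intro η hη
      set x0 : ℝ := ((k : ℝ) - a n) / b n with hx0
      set x : ℝ := x0 + η / B with hx
      have hx0x : x0 < x := by
        rw [hx]; have : 0 < η / B := div_pos hη hB; linarith
      have hsub : {ω | S n ω < k + 1} ⊆ {ω | (S n ω : ℝ) - a n < b n * x} := by
        intro ω hω
        simp only [Set.mem_setOf_eq] at hω ⊢
        have h1 : S n ω ≤ k := by omega
        have h2 : (S n ω : ℝ) ≤ (k : ℝ) := by exact_mod_cast h1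
        have h0 : b n * x0 = (k : ℝ) - a n := mul_div_cancel₀ _ hbn.ne'
        have : b n * x0 < b n * x := by
          exact mul_lt_mul_of_pos_left hx0x hbn
        linarith
      have h3 : (μ {ω | S n ω < k + 1}).toReal
          ≤ (μ {ω | (S n ω : ℝ) - a n < b n * x}).toReal :=
        ENNReal.toReal_mono (measure_ne_top μ _) (measure_mono hsub)
      have h4 := (abs_le.mp (fact1 x)).2
      have h5 : G x - G x0 ≤ B * (x - x0) := hGlip x0 x hx0x.le
      have h6 : B * (x - x0) = η := by
        rw [hx]; field_simp
        ring
      linarith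
    have h7 : (μ {ω | S n ω < k + 1}).toReal
        ≤ G (((k : ℝ) - a n) / b n) + ε n := by
      refine le_of_forall_pos_le_add fun η hη => ?_
      have := key η hη; linarith
    have h8 := (abs_le.mp (fact2 k)).1
    linarith
  -- the three reference points
  have h1le : (1 : ℝ) ≤ (v n : ℝ) := by exact_mod_cast hv n
  have hcast1 : ((m + (v n : ℤ) - 1 : ℤ) : ℝ) = (m : ℝ) + (v n : ℝ) - 1 := by push_cast; ring
  have hcast2 : ((m + (v n : ℤ) : ℤ) : ℝ) = (m : ℝ) + (v n : ℝ) := by push_cast; ring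
  set x1 : ℝ := ((m : ℝ) - a n) / b n with hx1
  set x1' : ℝ := (((m + (v n : ℤ) : ℤ) : ℝ) - 1 - a n) / b n with hx1'
  set x2 : ℝ := (((m + (v n : ℤ) : ℤ) : ℝ) - a n) / b n with hx2
  have hx1'eq : x1' = (((m + (v n : ℤ) - 1 : ℤ) : ℝ) - a n) / b n := by
    rw [hx1', hcast1, hcast2]
  have hx11' : x1 ≤ x1' := by
    rw [hx1, hx1', hcast2]
    gcongr
    linarith
  have hx1'2 : x1' ≤ x2 := by
    rw [hx1', hx2]
    gcongr
    linarith
  -- main pieces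
  have hsp1 := hsplit m (m + (v n : ℤ)) (by have := hv n; omega)
  have hsp2 := hsplit (m + (v n : ℤ) - 1) (m + (v n : ℤ)) (by omega)
  have hsetQ : {ω | m + (v n : ℤ) - 1 ≤ S n ω ∧ S n ω ≤ m + (v n : ℤ) - 1}
      = {ω | m + (v n : ℤ) - 1 ≤ S n ω ∧ S n ω ≤ m + (v n : ℤ) - 1} := rfl
  have hQle : (μ {ω | m + (v n : ℤ) - 1 ≤ S n ω ∧ S n ω ≤ m + (v n : ℤ) - 1}).toReal
      ≤ 2 * ε n := hpt (m + (v n : ℤ) - 1)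
  have hQ0 : (0:ℝ) ≤ (μ {ω | m + (v n : ℤ) - 1 ≤ S n ω ∧ S n ω ≤ m + (v n : ℤ) - 1}).toReal :=
    ENNReal.toReal_nonneg
  have hA1 : |(μ {ω | S n ω < m}).toReal - G x1| ≤ ε n := by
    rw [hx1]; exact fact2 m
  have hA2 : |(μ {ω | S n ω < m + (v n : ℤ)}).toReal - G x2| ≤ ε n := by
    rw [hx2]; exact fact2 (m + (v n : ℤ))
  have hA3 : |(μ {ω | S n ω < m + (v n : ℤ) - 1}).toReal - G x1'| ≤ ε n := by
    rw [hx1'eq]; exact fact2 (m + (v n : ℤ) - 1)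
  have hlen : x1' - x1 = ((v n : ℝ) - 1) / b n := by
    rw [hx1, hx1', hcast2, div_sub_div_same]
    congr 1
    ring
  have hvb1nn : (0:ℝ) ≤ ((v n : ℝ) - 1) / b n :=
    div_nonneg (by linarith) hbn.le
  have h_mid : |(∫ x in x1..x1', g x) - ((v n : ℝ) - 1) / b n * g x1|
      ≤ ((v n : ℝ) - 1) / b n * δ n := by
    have hc : ((v n : ℝ) - 1) / b n * g x1 = ∫ x in x1..x1', g x1 := by
      rw [intervalIntegral.integral_const, smul_eq_mul, hlen]
    rw [hc, ← intervalIntegral.integral_sub (hg_int.intervalIntegrable) intervalIntegrable_const]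
    have hb1 : ∀ x ∈ Set.uIoc x1 x1', ‖g x - g x1‖ ≤ δ n := by
      intro x hx
      rw [Set.uIoc_of_le hx11'] at hx
      apply hδ_bound n
      have habs : |x - x1| ≤ ((v n : ℝ) - 1) / b n := by
        rw [abs_of_nonneg (by linarith [hx.1])]
        linarith [hx.2, hlen]
      have h1b : ((v n : ℝ) - 1) / b n ≤ (v n : ℝ) / b n := by
        gcongr <;> linarith
      linarith
    have hnb := intervalIntegral.norm_integral_le_of_norm_le_const hb1
    rw [Real.norm_eq_abs] at hnb
    calc |∫ x in x1..x1', (g x - g x1)| ≤ δ n * |x1' - x1| := hnb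
      _ = ((v n : ℝ) - 1) / b n * δ n := by
          rw [hlen, abs_of_nonneg hvb1nn]; ring
  have hgd : G x1' - G x1 = ∫ x in x1..x1', g x := hGdiff x1 x1'
  have e1 := abs_le.mp hA1
  have e2 := abs_le.mp hA2
  have e3 := abs_le.mp hA3
  have e4 := abs_le.mp h_mid
  rw [abs_le]
  constructor <;>
    linarith [e1.1, e1.2, e2.1, e2.2, e3.1, e3.2, e4.1, e4.2, hsp1, hsp2, hQle, hQ0, hgd, hεnn]
end
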